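/- arXiv:2001.05344 — 2 statements merged into one kernel-verified Lean document; each statement's English description precedes it below -/
import Mathlib

section
/- Ω₀ vanishes on all of ℝ if and only if it vanishes on the support of F₀: Ω₀(a) = 0 for all a ∈ ℝ if and only if Ω₀(a) = 0 for all a ∈ 𝒜₀. -/
open MeasureTheory Set Filter

/-- Topological support of a Borel measure on ℝ. -/
def msupport (F₀ : Measure ℝ) : Set ℝ := {x : ℝ | ∀ U ∈ nhds x, F₀ U ≠ 0}

/-- Cumulative distribution function of `F₀`. -/
noncomputable def cdf0 (F₀ : Measure ℝ) (a : ℝ) : ℝ := (F₀ (Iic a)).toReal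

/-- `γ₀ := ∫ θ₀ dF₀`. -/
noncomputable def gamma0 (F₀ : Measure ℝ) (θ₀ : ℝ → ℝ) : ℝ := ∫ u, θ₀ u ∂F₀

/-- `Γ₀(a) := ∫_{(-∞,a]} θ₀ dF₀`. -/
noncomputable def Gamma0 (F₀ : Measure ℝ) (θ₀ : ℝ → ℝ) (a : ℝ) : ℝ := ∫ u in Iic a, θ₀ u ∂F₀

/-- `Ω₀(a) := Γ₀(a) − γ₀ F₀(a)`. -/
noncomputable def Omega0 (F₀ : Measure ℝ) (θ₀ : ℝ → ℝ) (a : ℝ) : ℝ :=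
  Gamma0 F₀ θ₀ a - gamma0 F₀ θ₀ * cdf0 F₀ a

/-! `Ω₀(a)` depends on `a` only through the class of `(-∞, a]` modulo `F₀`-null sets. If
`F₀(-∞, a] = 0` then `Ω₀(a) = 0`; otherwise the largest support point `s ≤ a` exists (the support
is closed) and `(-∞, s]` and `(-∞, a]` differ by a set missing the support, hence null, so
`Ω₀(a) = Ω₀(s)`. -/

lemma msupport_eq_support (μ : Measure ℝ) : msupport μ = μ.support := by
  ext x
  simp [msupport, Measure.mem_support_iff_forall, pos_iff_ne_zero]

namespace MeasureTheory.Measure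

variable {X : Type*} [ConditionallyCompleteLinearOrder X] [TopologicalSpace X] [OrderTopology X]
  [MeasurableSpace X] [HereditarilyLindelofSpace X]

lemma exists_mem_support_Iic_ae_eq_Iic {μ : Measure X} {a : X} (ha : μ (Iic a) ≠ 0) :
    ∃ s ∈ μ.support, Iic s =ᵐ[μ] Iic a := by
  set S := Iic a ∩ μ.support
  have hS_ne : S.Nonempty := nonempty_inter_support_of_pos (pos_iff_ne_zero.mpr ha)
  have hS_bdd : BddAbove S := ⟨a, fun _ hx => hx.1⟩
  have hsS : sSup S ∈ S := (isClosed_Iic.inter isClosed_support).csSup_mem hS_ne hS_bdd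
  refine ⟨sSup S, hsS.2, ae_eq_set.mpr ⟨?_, ?_⟩⟩
  · rw [sdiff_eq_empty.mpr (Iic_subset_Iic.mpr hsS.1), measure_empty]
  · have h_null : Iic a \ Iic (sSup S) ⊆ μ.supportᶜ := fun x hx hx_supp =>
      hx.2 (le_csSup hS_bdd ⟨hx.1, hx_supp⟩)
    exact measure_mono_null h_null measure_compl_support

end MeasureTheory.Measure

section Omega0

variable (F₀ : Measure ℝ) (θ₀ : ℝ → ℝ)

lemma Omega0_eq_of_Iic_ae_eq {s a : ℝ} (h : Iic s =ᵐ[F₀] Iic a) :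
    Omega0 F₀ θ₀ s = Omega0 F₀ θ₀ a := by
  simp only [Omega0, Gamma0, cdf0, setIntegral_congr_set h, measure_congr h]

lemma Omega0_eq_zero_of_measure_Iic_eq_zero {a : ℝ} (ha : F₀ (Iic a) = 0) :
    Omega0 F₀ θ₀ a = 0 := by
  simp [Omega0, Gamma0, cdf0, ha, Measure.restrict_eq_zero.mpr ha]

end Omega0

theorem primitive_vanishes_iff_vanishes_on_support_general
    (F₀ : Measure ℝ)
    (θ₀ : ℝ → ℝ) :
    (∀ a : ℝ, Omega0 F₀ θ₀ a = 0) ↔ (∀ a ∈ msupport F₀, Omega0 F₀ θ₀ a = 0) := by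
  refine ⟨fun h a _ => h a, fun h a => ?_⟩
  by_cases ha : F₀ (Iic a) = 0
  · exact Omega0_eq_zero_of_measure_Iic_eq_zero F₀ θ₀ ha
  · obtain ⟨s, hs, hsa⟩ := Measure.exists_mem_support_Iic_ae_eq_Iic ha
    rw [← Omega0_eq_of_Iic_ae_eq F₀ θ₀ hsa]
    exact h s (msupport_eq_support F₀ ▸ hs)

/-- `Ω₀` vanishes on all of ℝ if and only if it vanishes on the support of `F₀`. -/
theorem primitive_vanishes_iff_vanishes_on_support
    (F₀ : Measure ℝ) [IsProbabilityMeasure F₀]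
    (θ₀ : ℝ → ℝ) (hθm : Measurable θ₀) (hθb : ∃ C : ℝ, ∀ a : ℝ, |θ₀ a| ≤ C) :
    (∀ a : ℝ, Omega0 F₀ θ₀ a = 0) ↔ (∀ a ∈ msupport F₀, Omega0 F₀ θ₀ a = 0) :=
  primitive_vanishes_iff_vanishes_on_support_general F₀ θ₀
end

section
/- Sub-Gaussian intrinsic-metric bound for the influence-function process: Suppose in addition that |Y| ≤ M < ∞ almost surely. Then there exists a constant C < ∞, depending only on M, K₀, and K₁, such that for all s ≤ t in ℝ, E[(D*_t(Y, A, W) − D*_s(Y, A, W))²] ≤ C·(F₀(t) − F₀(s)). -/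
open MeasureTheory Set Filter

/-- Indicator `1{a ≤ a₀}`. -/
noncomputable def indLe (a₀ a : ℝ) : ℝ := if a ≤ a₀ then 1 else 0

/-- `θ_μ(a) := ∫ μ(a,w) dQ₀(w)`. -/
noncomputable def thetaMu {𝒲 : Type*} [MeasurableSpace 𝒲] (Q₀ : Measure 𝒲)
    (μ : ℝ → 𝒲 → ℝ) (a : ℝ) : ℝ := ∫ w, μ a w ∂Q₀

/-- `γ_μ := ∬ μ(a,w) dF₀(a) dQ₀(w)`. -/
noncomputable def gammaMu {𝒲 : Type*} [MeasurableSpace 𝒲] (F₀ : Measure ℝ) (Q₀ : Measure 𝒲)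
    (μ : ℝ → 𝒲 → ℝ) : ℝ := ∫ a, ∫ w, μ a w ∂Q₀ ∂F₀

/-- `Ω_μ(a₀) := ∬ [1{a ≤ a₀} − F₀(a₀)] μ(a,w) dF₀(a) dQ₀(w)`. -/
noncomputable def OmegaMu {𝒲 : Type*} [MeasurableSpace 𝒲] (F₀ : Measure ℝ) (Q₀ : Measure 𝒲)
    (μ : ℝ → 𝒲 → ℝ) (a₀ : ℝ) : ℝ :=
  ∫ a, ∫ w, (indLe a₀ a - cdf0 F₀ a₀) * μ a w ∂Q₀ ∂F₀

/-- The one-step functional `D_{a₀,μ,g}(y,a,w)`. -/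
noncomputable def Dfun {𝒲 : Type*} [MeasurableSpace 𝒲] (F₀ : Measure ℝ) (Q₀ : Measure 𝒲)
    (μ g : ℝ → 𝒲 → ℝ) (a₀ y a : ℝ) (w : 𝒲) : ℝ :=
  (indLe a₀ a - cdf0 F₀ a₀) * ((y - μ a w) / g a w + thetaMu Q₀ μ a - gammaMu F₀ Q₀ μ)
    + (∫ u, (indLe a₀ u - cdf0 F₀ a₀) * μ u w ∂F₀) - OmegaMu F₀ Q₀ μ a₀

/-- The efficient influence function `D*_{a₀}(y,a,w)`. -/
noncomputable def Dstar {𝒲 : Type*} [MeasurableSpace 𝒲] (F₀ : Measure ℝ) (Q₀ : Measure 𝒲)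
    (μ₀ g₀ : ℝ → 𝒲 → ℝ) (a₀ y a : ℝ) (w : 𝒲) : ℝ :=
  (indLe a₀ a - cdf0 F₀ a₀) *
      ((y - μ₀ a w) / g₀ a w + thetaMu Q₀ μ₀ a - gammaMu F₀ Q₀ μ₀)
    + (∫ u, (indLe a₀ u - cdf0 F₀ a₀) * μ₀ u w ∂F₀) - 2 * OmegaMu F₀ Q₀ μ₀ a₀

/-!
Write `x = 1{s < A ≤ t}` and `d = F₀(t) − F₀(s) = E[x]`. The increment `D*_t − D*_s` is
`(x − d)·h + ΔJ − 2·ΔΩ`, where `h = (Y − μ₀)/g₀ + θ₀(A) − γ₀` is bounded by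
`B = (M + K₀)/K₁ + 2K₀`, and `ΔJ`, `ΔΩ` are increments in `a₀` of
`∫ (1{u ≤ a₀} − F₀(a₀)) φ(u) dF₀(u)` for functions `φ` bounded by `K₀`. Such an increment is
the covariance of `1{s < u ≤ t}` with `φ`, hence at most `2K₀·d`. So
`|D*_t − D*_s| ≤ B·x + (B + 6K₀)·d`, and squaring with `x² = x`, `d² ≤ d` and taking
expectations bounds `E[(D*_t − D*_s)²]` by a constant times `d`.
-/

lemma abs_div_le_of_abs_le {r g R K₁ : ℝ} (hK₁ : 0 < K₁) (hg : K₁ ≤ g) (hr : |r| ≤ R) :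
    |r / g| ≤ R / K₁ := by
  rw [abs_div, abs_of_pos (hK₁.trans_le hg)]
  exact div_le_div₀ ((abs_nonneg r).trans hr) hr hK₁ hg

lemma sq_le_of_abs_le_mul_add_mul {z b v x d : ℝ} (hx : x ^ 2 = x) (h : |z| ≤ b * x + v * d) :
    z ^ 2 ≤ 2 * b ^ 2 * x + 2 * v ^ 2 * d ^ 2 :=
  calc z ^ 2 = |z| ^ 2 := (sq_abs z).symm
    _ ≤ (b * x + v * d) ^ 2 := pow_le_pow_left₀ (abs_nonneg z) h 2
    _ ≤ 2 * ((b * x) ^ 2 + (v * d) ^ 2) := add_sq_le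
    _ = 2 * b ^ 2 * x + 2 * v ^ 2 * d ^ 2 := by rw [mul_pow, mul_pow, hx]; ring

lemma indicator_one_sq {α M₀ : Type*} [MonoidWithZero M₀] (S : Set α) (a : α) :
    S.indicator (1 : α → M₀) a ^ 2 = S.indicator 1 a := by
  by_cases h : a ∈ S <;> simp [h]

lemma abs_integral_sub_integral_mul_le {α : Type*} [MeasurableSpace α] {ν : Measure α}
    [IsProbabilityMeasure ν] {x φ : α → ℝ} {K : ℝ} (hx : Integrable x ν)
    (hφK : ∀ᵐ a ∂ν, |φ a| ≤ K) :
    |∫ a, (x a - ∫ b, x b ∂ν) * φ a ∂ν| ≤ 2 * K * ∫ a, |x a| ∂ν := by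
  obtain ⟨a₀, ha₀⟩ := hφK.exists
  have hK : 0 ≤ K := (abs_nonneg _).trans ha₀
  have hdom : Integrable (fun a => (|x a| + |∫ b, x b ∂ν|) * K) ν :=
    (hx.abs.add (integrable_const _)).mul_const K
  calc |∫ a, (x a - ∫ b, x b ∂ν) * φ a ∂ν|
      ≤ ∫ a, (|x a| + |∫ b, x b ∂ν|) * K ∂ν := by
        refine (Real.norm_eq_abs _).symm.trans_le
          (norm_integral_le_of_norm_le hdom (hφK.mono fun a ha => ?_))
        rw [Real.norm_eq_abs, abs_mul]
        exact mul_le_mul (abs_sub _ _) ha (abs_nonneg _) (by positivity)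
    _ = (∫ a, |x a| ∂ν + |∫ b, x b ∂ν|) * K := by
        rw [integral_mul_const, integral_add hx.abs (integrable_const |∫ b, x b ∂ν|),
          integral_const, probReal_univ, one_smul]
    _ ≤ 2 * K * ∫ a, |x a| ∂ν := by
        nlinarith [abs_integral_le_integral_abs (f := x) (μ := ν)]

lemma indLe_eq_indicator (a₀ : ℝ) : indLe a₀ = (Iic a₀).indicator 1 := by
  ext a
  simp [indLe, indicator_apply]

lemma indLe_sub_indLe {s t : ℝ} (hst : s ≤ t) (a : ℝ) :
    indLe t a - indLe s a = (Ioc s t).indicator 1 a := by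
  rw [indLe_eq_indicator, indLe_eq_indicator, ← Iic_sdiff_Iic,
    indicator_sdiff (Iic_subset_Iic.mpr hst), Pi.sub_apply]

lemma cdf0_sub_cdf0 (ν : Measure ℝ) [IsFiniteMeasure ν] {s t : ℝ} (hst : s ≤ t) :
    cdf0 ν t - cdf0 ν s = ν.real (Ioc s t) := by
  rw [← Iic_sdiff_Iic, measureReal_sdiff (Iic_subset_Iic.mpr hst) measurableSet_Iic, cdf0, cdf0,
    measureReal_def, measureReal_def]

lemma cdf0_sub_cdf0_nonneg (ν : Measure ℝ) [IsFiniteMeasure ν] {s t : ℝ} (hst : s ≤ t) :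
    0 ≤ cdf0 ν t - cdf0 ν s :=
  cdf0_sub_cdf0 ν hst ▸ measureReal_nonneg

lemma cdf0_sub_cdf0_le_one (ν : Measure ℝ) [IsProbabilityMeasure ν] {s t : ℝ} (hst : s ≤ t) :
    cdf0 ν t - cdf0 ν s ≤ 1 :=
  cdf0_sub_cdf0 ν hst ▸ measureReal_le_one

lemma integrable_indLe_sub_mul (ν : Measure ℝ) [IsFiniteMeasure ν] (a₀ : ℝ) {φ : ℝ → ℝ} {K : ℝ}
    (hφ : AEStronglyMeasurable φ ν) (hφK : ∀ a, |φ a| ≤ K) :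
    Integrable (fun a => (indLe a₀ a - cdf0 ν a₀) * φ a) ν := by
  refine Integrable.mul_bdd ?_ hφ (ae_of_all _ hφK)
  rw [indLe_eq_indicator]
  exact ((integrable_const 1).indicator measurableSet_Iic).sub (integrable_const _)

lemma abs_integral_indLe_sub_mul_sub_le (ν : Measure ℝ) [IsProbabilityMeasure ν] {s t : ℝ}
    (hst : s ≤ t) {φ : ℝ → ℝ} {K : ℝ} (hφ : AEStronglyMeasurable φ ν) (hφK : ∀ a, |φ a| ≤ K) :
    |∫ a, (indLe t a - cdf0 ν t) * φ a ∂ν - ∫ a, (indLe s a - cdf0 ν s) * φ a ∂ν|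
      ≤ 2 * K * (cdf0 ν t - cdf0 ν s) := by
  have hx : Integrable ((Ioc s t).indicator (1 : ℝ → ℝ)) ν :=
    (integrable_const (1 : ℝ)).indicator measurableSet_Ioc
  have hmean : ∫ a, (Ioc s t).indicator (1 : ℝ → ℝ) a ∂ν = cdf0 ν t - cdf0 ν s := by
    rw [integral_indicator_one measurableSet_Ioc, cdf0_sub_cdf0 ν hst]
  have habs : ∫ a, |(Ioc s t).indicator (1 : ℝ → ℝ) a| ∂ν = cdf0 ν t - cdf0 ν s := by
    rw [← hmean]
    congr 1 with a
    exact abs_of_nonneg (indicator_nonneg (fun _ _ => zero_le_one) a)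
  have hcov := abs_integral_sub_integral_mul_le hx (ae_of_all _ hφK)
  rw [hmean, habs] at hcov
  rw [← integral_sub (integrable_indLe_sub_mul ν t hφ hφK) (integrable_indLe_sub_mul ν s hφ hφK)]
  convert hcov using 3
  funext a
  rw [← indLe_sub_indLe hst]
  ring

section Bounds

variable {𝒲 : Type*} [MeasurableSpace 𝒲] {F₀ : Measure ℝ} {Q₀ : Measure 𝒲} {μ : ℝ → 𝒲 → ℝ}
  {K : ℝ}

lemma abs_thetaMu_le [IsProbabilityMeasure Q₀] (hμ : ∀ a w, |μ a w| ≤ K) (a : ℝ) :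
    |thetaMu Q₀ μ a| ≤ K := by
  simpa [thetaMu] using
    norm_integral_le_of_norm_le_const (μ := Q₀) (f := μ a) (ae_of_all _ (hμ a))

lemma abs_gammaMu_le [IsProbabilityMeasure F₀] [IsProbabilityMeasure Q₀]
    (hμ : ∀ a w, |μ a w| ≤ K) : |gammaMu F₀ Q₀ μ| ≤ K := by
  simpa [thetaMu, gammaMu] using norm_integral_le_of_norm_le_const (μ := F₀) (f := thetaMu Q₀ μ)
    (ae_of_all _ (abs_thetaMu_le hμ))

lemma OmegaMu_eq_integral_thetaMu (a₀ : ℝ) :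
    OmegaMu F₀ Q₀ μ a₀ = ∫ a, (indLe a₀ a - cdf0 F₀ a₀) * thetaMu Q₀ μ a ∂F₀ := by
  simp only [OmegaMu, thetaMu, integral_const_mul]

end Bounds

section Increments

variable {𝒲 : Type*} [MeasurableSpace 𝒲] {F₀ : Measure ℝ} {Q₀ : Measure 𝒲} {μ g : ℝ → 𝒲 → ℝ}

lemma Dstar_sub_Dstar (s t y a : ℝ) (w : 𝒲) :
    Dstar F₀ Q₀ μ g t y a w - Dstar F₀ Q₀ μ g s y a w
      = (indLe t a - indLe s a - (cdf0 F₀ t - cdf0 F₀ s))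
          * ((y - μ a w) / g a w + thetaMu Q₀ μ a - gammaMu F₀ Q₀ μ)
        + ((∫ u, (indLe t u - cdf0 F₀ t) * μ u w ∂F₀)
          - ∫ u, (indLe s u - cdf0 F₀ s) * μ u w ∂F₀)
        - 2 * (OmegaMu F₀ Q₀ μ t - OmegaMu F₀ Q₀ μ s) := by
  simp only [Dstar]
  ring

variable [IsProbabilityMeasure F₀] [IsProbabilityMeasure Q₀] {K₀ K₁ M : ℝ}

lemma abs_Dstar_sub_Dstar_le (hμm : Measurable (Function.uncurry μ))
    (hμ : ∀ a w, |μ a w| ≤ K₀) (hK₁ : 0 < K₁) {s t y a : ℝ} {w : 𝒲} (hst : s ≤ t)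
    (hg : K₁ ≤ g a w) (hy : |y| ≤ M) :
    |Dstar F₀ Q₀ μ g t y a w - Dstar F₀ Q₀ μ g s y a w|
      ≤ ((M + K₀) / K₁ + 2 * K₀) * (Ioc s t).indicator 1 a
        + ((M + K₀) / K₁ + 8 * K₀) * (cdf0 F₀ t - cdf0 F₀ s) := by
  have hd := cdf0_sub_cdf0_nonneg F₀ hst
  have hx : 0 ≤ (Ioc s t).indicator (1 : ℝ → ℝ) a := indicator_nonneg (fun _ _ => zero_le_one) a
  have hbias : |(y - μ a w) / g a w + thetaMu Q₀ μ a - gammaMu F₀ Q₀ μ|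
      ≤ (M + K₀) / K₁ + 2 * K₀ := by
    calc _ ≤ |(y - μ a w) / g a w| + |thetaMu Q₀ μ a| + |gammaMu F₀ Q₀ μ| :=
          (abs_sub _ _).trans (add_le_add_left (abs_add_le _ _) _)
      _ ≤ (M + K₀) / K₁ + K₀ + K₀ := by
          gcongr
          · exact abs_div_le_of_abs_le hK₁ hg ((abs_sub _ _).trans (add_le_add hy (hμ a w)))
          · exact abs_thetaMu_le hμ a
          · exact abs_gammaMu_le hμ
      _ = _ := by ring
  have hJ := abs_integral_indLe_sub_mul_sub_le F₀ hst (φ := (μ · w))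
    hμm.of_uncurry_right.aestronglyMeasurable (hμ · w)
  have hΩ : |OmegaMu F₀ Q₀ μ t - OmegaMu F₀ Q₀ μ s| ≤ 2 * K₀ * (cdf0 F₀ t - cdf0 F₀ s) := by
    simpa only [OmegaMu_eq_integral_thetaMu] using
      abs_integral_indLe_sub_mul_sub_le F₀ hst (φ := thetaMu Q₀ μ)
      (hμm.stronglyMeasurable.integral_prod_right (ν := Q₀)).aestronglyMeasurable
      (abs_thetaMu_le hμ)
  rw [Dstar_sub_Dstar, indLe_sub_indLe hst]
  set x : ℝ := (Ioc s t).indicator 1 a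
  set d : ℝ := cdf0 F₀ t - cdf0 F₀ s
  set h := (y - μ a w) / g a w + thetaMu Q₀ μ a - gammaMu F₀ Q₀ μ
  set ΔJ := (∫ u, (indLe t u - cdf0 F₀ t) * μ u w ∂F₀) - ∫ u, (indLe s u - cdf0 F₀ s) * μ u w ∂F₀
  set ΔΩ := OmegaMu F₀ Q₀ μ t - OmegaMu F₀ Q₀ μ s
  calc |(x - d) * h + ΔJ - 2 * ΔΩ|
      ≤ |(x - d) * h| + |ΔJ| + |2 * ΔΩ| :=
        (abs_sub _ _).trans (add_le_add_left (abs_add_le _ _) _)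
    _ = |x - d| * |h| + |ΔJ| + 2 * |ΔΩ| := by rw [abs_mul, abs_mul, abs_two]
    _ ≤ (x + d) * ((M + K₀) / K₁ + 2 * K₀) + 2 * K₀ * d + 2 * (2 * K₀ * d) := by
        gcongr
        exact (abs_sub _ _).trans_eq (by rw [abs_of_nonneg hx, abs_of_nonneg hd])
    _ = _ := by ring

end Increments

theorem eif_process_subgaussian_bound_general
    {Ωs 𝒲 : Type*} [MeasurableSpace Ωs] [MeasurableSpace 𝒲]
    (P : Measure Ωs) [IsProbabilityMeasure P]
    (Y A : Ωs → ℝ) (W : Ωs → 𝒲) (hA : Measurable A) (hW : Measurable W)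
    (F₀ : Measure ℝ) [IsProbabilityMeasure F₀] (Q₀ : Measure 𝒲) [IsProbabilityMeasure Q₀]
    (hAlaw : Measure.map A P = F₀)
    (K₀ K₁ K₂ : ℝ) (hK₁ : 0 < K₁)
    (g₀ : ℝ → 𝒲 → ℝ)
    (hjoint : Measure.map (fun ω => (A ω, W ω)) P
      = (F₀.prod Q₀).withDensity (fun q => ENNReal.ofReal (g₀ q.1 q.2)))
    (hg₀bd : ∀ᵐ q ∂(F₀.prod Q₀), K₁ ≤ g₀ q.1 q.2 ∧ g₀ q.1 q.2 ≤ K₂)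
    (μ₀ : ℝ → 𝒲 → ℝ) (hμ₀m : Measurable (Function.uncurry μ₀))
    (hμ₀bd : ∀ a w, |μ₀ a w| ≤ K₀)
    (M : ℝ) (hM : ∀ᵐ ω ∂P, |Y ω| ≤ M) :
    ∃ C : ℝ, ∀ s t : ℝ, s ≤ t →
      ∫ ω, (Dstar F₀ Q₀ μ₀ g₀ t (Y ω) (A ω) (W ω)
          - Dstar F₀ Q₀ μ₀ g₀ s (Y ω) (A ω) (W ω)) ^ 2 ∂P
        ≤ C * (cdf0 F₀ t - cdf0 F₀ s) := by
  set B := (M + K₀) / K₁ + 2 * K₀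
  set V := (M + K₀) / K₁ + 8 * K₀
  refine ⟨2 * B ^ 2 + 2 * V ^ 2, fun s t hst => ?_⟩
  have hg : ∀ᵐ ω ∂P, K₁ ≤ g₀ (A ω) (W ω) :=
    ae_of_ae_map (hA.prodMk hW).aemeasurable
      (hjoint ▸ (withDensity_absolutelyContinuous _ _).ae_le (hg₀bd.mono fun _ hq => hq.1))
  set x := (A ⁻¹' Ioc s t).indicator (1 : Ωs → ℝ)
  have hx : Integrable x P := (integrable_const 1).indicator (hA measurableSet_Ioc)
  have hEx : ∫ ω, x ω ∂P = cdf0 F₀ t - cdf0 F₀ s := by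
    rw [integral_indicator_one (hA measurableSet_Ioc), ← map_measureReal_apply hA measurableSet_Ioc,
      hAlaw, cdf0_sub_cdf0 F₀ hst]
  have hd₀ := cdf0_sub_cdf0_nonneg F₀ hst
  have hd₁ := cdf0_sub_cdf0_le_one F₀ hst
  set d := cdf0 F₀ t - cdf0 F₀ s
  calc _ ≤ ∫ ω, (2 * B ^ 2 * x ω + 2 * V ^ 2 * d ^ 2) ∂P := by
        refine integral_mono_of_nonneg (ae_of_all _ fun _ => sq_nonneg _)
          ((hx.const_mul _).add (integrable_const _)) ?_
        filter_upwards [hM, hg] with ω hYω hgω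
        exact sq_le_of_abs_le_mul_add_mul (indicator_one_sq _ _)
          (abs_Dstar_sub_Dstar_le hμ₀m hμ₀bd hK₁ hst hgω hYω)
    _ = 2 * B ^ 2 * d + 2 * V ^ 2 * d ^ 2 := by
        rw [integral_add (hx.const_mul _) (integrable_const _),
          integral_const_mul, hEx, integral_const, probReal_univ, one_smul]
    _ ≤ (2 * B ^ 2 + 2 * V ^ 2) * d := by
        nlinarith [mul_nonneg (sq_nonneg V) (mul_nonneg hd₀ (sub_nonneg.mpr hd₁))]

/-- Sub-Gaussian intrinsic-metric bound for the influence-function process. -/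
theorem eif_process_subgaussian_bound
    {Ωs 𝒲 : Type*} [MeasurableSpace Ωs] [MeasurableSpace 𝒲]
    (P : Measure Ωs) [IsProbabilityMeasure P]
    (Y A : Ωs → ℝ) (W : Ωs → 𝒲) (hY : Measurable Y) (hA : Measurable A) (hW : Measurable W)
    (F₀ : Measure ℝ) [IsProbabilityMeasure F₀] (Q₀ : Measure 𝒲) [IsProbabilityMeasure Q₀]
    (hAlaw : Measure.map A P = F₀) (hWlaw : Measure.map W P = Q₀)
    (K₀ K₁ K₂ : ℝ) (hK₀ : 0 ≤ K₀) (hK₁ : 0 < K₁) (hK₁₂ : K₁ ≤ K₂)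
    (g₀ : ℝ → 𝒲 → ℝ) (hg₀m : Measurable (Function.uncurry g₀))
    (hjoint : Measure.map (fun ω => (A ω, W ω)) P
      = (F₀.prod Q₀).withDensity (fun q => ENNReal.ofReal (g₀ q.1 q.2)))
    (hg₀bd : ∀ᵐ q ∂(F₀.prod Q₀), K₁ ≤ g₀ q.1 q.2 ∧ g₀ q.1 q.2 ≤ K₂)
    (μ₀ : ℝ → 𝒲 → ℝ) (hμ₀m : Measurable (Function.uncurry μ₀))
    (hμ₀bd : ∀ a w, |μ₀ a w| ≤ K₀)
    (hcond : MeasureTheory.condExp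
        (MeasurableSpace.comap (fun ω => (A ω, W ω)) inferInstance) P Y
      =ᵐ[P] fun ω => μ₀ (A ω) (W ω))
    (M : ℝ) (hM : ∀ᵐ ω ∂P, |Y ω| ≤ M) :
    ∃ C : ℝ, ∀ s t : ℝ, s ≤ t →
      ∫ ω, (Dstar F₀ Q₀ μ₀ g₀ t (Y ω) (A ω) (W ω)
          - Dstar F₀ Q₀ μ₀ g₀ s (Y ω) (A ω) (W ω)) ^ 2 ∂P
        ≤ C * (cdf0 F₀ t - cdf0 F₀ s) :=
  eif_process_subgaussian_bound_general P Y A W hA hW F₀ Q₀ hAlaw K₀ K₁ K₂ hK₁ g₀ hjoint hg₀bd μ₀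
    hμ₀m hμ₀bd M hM
end
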